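/- arXiv:2602.03911 — 3 statements merged into one kernel-verified Lean document; each statement's English description precedes it below -/
import Mathlib

section
/- Let ξ ∈ (0,1], s = 2/ξ, and α_k = 2/(ξ(k+s)). Suppose (e_k) is a sequence of nonnegative reals with e_{k+1} ≤ (1 − ξ α_k) e_k + α_k² c for some c ≥ 0. Then for all k ≥ 1, e_k ≤ Γ/(k+s), where Γ = (s+1)·max(e_0, 4c/(s ξ²)). -/
/-!
Write `s = 2/ξ`, so that `ξ α_k = 2/(k+s)` and `α_k² c = D/(k+s)²` with `D = 4c/ξ²`. The bound
`e_k ≤ Γ/(k+s)` is then propagated by induction: if `D ≤ Γ` and `Γ ≥ 0`, the recursion maps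
`Γ/t` to at most `((t-2)Γ + D)/t² ≤ Γ/(t+1)`. With `M = max(e_0, 4c/(sξ²)) ≥ 0`, the constant
`Γ = (s+1)M` gives both the base case `e_0 ≤ M ≤ Γ/s` and `D ≤ sM ≤ Γ`.
-/

lemma one_sub_two_div_mul_div_add_div_sq_le {t Γ D : ℝ} (ht : 2 ≤ t) (hΓ : 0 ≤ Γ)
    (hD : D ≤ Γ) : (1 - 2 / t) * (Γ / t) + D / t ^ 2 ≤ Γ / (t + 1) := by
  have ht0 : 0 < t := by linarith
  calc (1 - 2 / t) * (Γ / t) + D / t ^ 2 = ((t - 2) * Γ + D) / t ^ 2 := by field_simp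
    _ ≤ Γ / (t + 1) := by
      rw [div_le_div_iff₀ (by positivity) (by linarith)]
      nlinarith

lemma le_div_add_of_le_one_sub_two_div_mul_add {e : ℕ → ℝ} {s Γ D : ℝ} (hs : 2 ≤ s)
    (hΓ : 0 ≤ Γ) (hD : D ≤ Γ) (h0 : e 0 ≤ Γ / s)
    (hrec : ∀ k : ℕ, e (k + 1) ≤ (1 - 2 / (k + s)) * e k + D / (k + s) ^ 2) :
    ∀ k : ℕ, e k ≤ Γ / (k + s) := by
  intro k
  induction k with
  | zero => simpa using h0
  | succ k ih =>
    have ht : 2 ≤ (k : ℝ) + s := by linarith [k.cast_nonneg (α := ℝ)]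
    have hcoef : 0 ≤ 1 - 2 / ((k : ℝ) + s) := by
      rw [sub_nonneg, div_le_one (by linarith)]
      exact ht
    calc e (k + 1) ≤ (1 - 2 / (k + s)) * e k + D / (k + s) ^ 2 := hrec k
      _ ≤ (1 - 2 / (k + s)) * (Γ / (k + s)) + D / (k + s) ^ 2 := by gcongr
      _ ≤ Γ / (k + s + 1) := one_sub_two_div_mul_div_add_div_sq_le ht hΓ hD
      _ = Γ / ((k + 1 : ℕ) + s) := by push_cast; ring_nf

theorem inner_loop_rate_general
    (ξ : ℝ) (hξ0 : 0 < ξ) (hξ1 : ξ ≤ 1)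
    (c : ℝ)
    (e : ℕ → ℝ) (he : ∀ k, 0 ≤ e k)
    (hrec : ∀ k : ℕ,
      e (k + 1) ≤ (1 - ξ * (2 / (ξ * (k + 2 / ξ)))) * e k
        + (2 / (ξ * (k + 2 / ξ))) ^ 2 * c) :
    ∀ k : ℕ, 1 ≤ k →
      e k ≤ (2 / ξ + 1) * max (e 0) (4 * c / ((2 / ξ) * ξ ^ 2)) / (k + 2 / ξ) := by
  set s := 2 / ξ with hs_def
  set M := max (e 0) (4 * c / (s * ξ ^ 2))
  have hs : 2 ≤ s := by rw [hs_def, le_div_iff₀ hξ0]; linarith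
  have hM : 0 ≤ M := (he 0).trans (le_max_left _ _)
  have hD : 4 * c / ξ ^ 2 ≤ (s + 1) * M := calc
    4 * c / ξ ^ 2 = s * (4 * c / (s * ξ ^ 2)) := by field_simp
    _ ≤ s * M := by gcongr; exact le_max_right _ _
    _ ≤ (s + 1) * M := by linarith
  have h0 : e 0 ≤ (s + 1) * M / s := by
    rw [le_div_iff₀ (by linarith)]
    nlinarith [le_max_left (e 0) (4 * c / (s * ξ ^ 2))]
  refine fun k _ => le_div_add_of_le_one_sub_two_div_mul_add hs (by positivity) hD h0 (fun k => ?_) k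
  have hrate : ξ * (2 / (ξ * (k + s))) = 2 / (k + s) := by field_simp
  have hnoise : (2 / (ξ * (k + s))) ^ 2 * c = 4 * c / ξ ^ 2 / (k + s) ^ 2 := by field_simp; ring
  simpa only [hrate, hnoise] using hrec k

theorem inner_loop_rate
    (ξ : ℝ) (hξ0 : 0 < ξ) (hξ1 : ξ ≤ 1)
    (c : ℝ) (hc : 0 ≤ c)
    (e : ℕ → ℝ) (he : ∀ k, 0 ≤ e k)
    (hrec : ∀ k : ℕ,
      e (k + 1) ≤ (1 - ξ * (2 / (ξ * (k + 2 / ξ)))) * e k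
        + (2 / (ξ * (k + 2 / ξ))) ^ 2 * c) :
    ∀ k : ℕ, 1 ≤ k →
      e k ≤ (2 / ξ + 1) * max (e 0) (4 * c / ((2 / ξ) * ξ ^ 2)) / (k + 2 / ξ) :=
  inner_loop_rate_general ξ hξ0 hξ1 c e he hrec
end

section
/- Among all real sequences (K_j)_{j=0}^{N−1} with K_j > 0 satisfying the constraint ∑_{j=0}^{N−1} μ^{N−1−j} √(c₂/K_j) ≤ ε/2, the geometrically increasing schedule K_j = C μ^{(2/3)(N−1−j)} with C = (4c₂/ε²)((1−μ^{(2/3)N})/(1−μ^{2/3}))² minimizes the total cost ∑_{j=0}^{N−1} K_j. -/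
/-!
The schedule is the Lagrange point of minimising `∑ K_j` under `∑ a_j / √K_j ≤ b`, with
`a_j = μ^(N-1-j) √c₂`: there `K_j^(3/2)` is proportional to `a_j`. If `k_j √k_j = c a_j` and
`∑ k_j = c b`, then AM–GM for `K_j`, `k_j √k_j / √K_j`, `k_j √k_j / √K_j` (product `k_j³`) gives
`3 k_j ≤ K_j + 2 c a_j / √K_j`; summing and using the constraint,
`3 ∑ k_j ≤ ∑ K_j + 2 c b = ∑ K_j + 2 ∑ k_j`.
-/

open Finset Real

lemma three_mul_le_add_two_mul_mul_sqrt_div_sqrt {k x : ℝ} (hk : 0 ≤ k) (hx : 0 < x) :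
    3 * k ≤ x + 2 * (k * √k) / √x := by
  obtain ⟨u, hu, rfl⟩ : ∃ u, 0 < u ∧ u ^ 2 = x := ⟨√x, sqrt_pos.2 hx, sq_sqrt hx.le⟩
  obtain ⟨t, ht, rfl⟩ : ∃ t, 0 ≤ t ∧ t ^ 2 = k := ⟨√k, sqrt_nonneg k, sq_sqrt hk⟩
  have factor : u ^ 2 + 2 * (t ^ 2 * t) / u - 3 * t ^ 2 = (u - t) ^ 2 * (u + 2 * t) / u := by
    field_simp
    ring
  rw [sqrt_sq hu.le, sqrt_sq ht, ← sub_nonneg, factor]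
  positivity

section Lagrange

variable {ι : Type*} {s : Finset ι} {a k : ι → ℝ} {b c : ℝ}

theorem sum_div_sqrt_le_of_sum_eq (hb : 0 ≤ b) (hk : ∀ i ∈ s, 0 ≤ k i)
    (hka : ∀ i ∈ s, k i * √(k i) = c * a i) (hsum : ∑ i ∈ s, k i = c * b) :
    ∑ i ∈ s, a i / √(k i) ≤ b := by
  have hterm : ∀ i ∈ s, a i / √(k i) = k i / c := by
    intro i hi
    rcases (hk i hi).eq_or_lt with hki | hki
    · simp [← hki]
    have hc : c ≠ 0 := by
      rintro rfl
      have := hka i hi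
      simp only [zero_mul, mul_eq_zero, sqrt_eq_zero'] at this
      rcases this with h | h <;> linarith
    have hsk : √(k i) ≠ 0 := (sqrt_pos.2 hki).ne'
    rw [eq_div_iff hc, div_mul_eq_mul_div, mul_comm, ← hka i hi, mul_div_cancel_right₀ _ hsk]
  rw [sum_congr rfl hterm, ← sum_div, hsum]
  rcases eq_or_ne c 0 with rfl | hc
  · simpa using hb
  · rw [mul_div_cancel_left₀ _ hc]

theorem sum_le_sum_of_sum_div_sqrt_le (hc : 0 ≤ c) (hk : ∀ i ∈ s, 0 ≤ k i)
    (hka : ∀ i ∈ s, k i * √(k i) = c * a i) (hsum : ∑ i ∈ s, k i = c * b)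
    {K : ι → ℝ} (hK : ∀ i ∈ s, 0 < K i) (hKb : ∑ i ∈ s, a i / √(K i) ≤ b) :
    ∑ i ∈ s, k i ≤ ∑ i ∈ s, K i := by
  have hpointwise : ∀ i ∈ s, 3 * k i ≤ K i + 2 * c * (a i / √(K i)) := by
    intro i hi
    have := three_mul_le_add_two_mul_mul_sqrt_div_sqrt (hk i hi) (hK i hi)
    rwa [hka i hi, mul_div_assoc, mul_div_assoc, ← mul_assoc] at this
  have hsum3 := sum_le_sum hpointwise
  rw [← mul_sum, sum_add_distrib, ← mul_sum] at hsum3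
  nlinarith [mul_le_mul_of_nonneg_left hKb (by positivity : 0 ≤ 2 * c)]

end Lagrange

lemma sum_range_rpow_mul_reflect {x : ℝ} (hx : 0 ≤ x) {p : ℝ} (hp : x ^ p ≠ 1) (N : ℕ) :
    ∑ j ∈ range N, x ^ (p * ((N - 1 - j : ℕ) : ℝ)) = (1 - x ^ (p * N)) / (1 - x ^ p) := by
  have hpow : ∀ m : ℕ, x ^ (p * (m : ℝ)) = (x ^ p) ^ m := fun m => by
    rw [rpow_mul hx, rpow_natCast]
  simp only [hpow]
  rw [sum_range_reflect (fun i => (x ^ p) ^ i) N, geom_sum_eq hp, ← neg_div_neg_eq, neg_sub,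
    neg_sub]

lemma rpow_two_thirds_mul_mul_sqrt {x : ℝ} (hx : 0 < x) (m : ℕ) :
    x ^ ((2 / 3 : ℝ) * m) * √(x ^ ((2 / 3 : ℝ) * m)) = x ^ m := by
  rw [sqrt_eq_rpow, ← rpow_mul hx.le, ← rpow_add hx, ← rpow_natCast]
  ring_nf

theorem geometric_TUF_optimal
    (μ : ℝ) (hμ0 : 0 < μ) (hμ1 : μ < 1)
    (N : ℕ) (c₂ ε : ℝ) (hc₂ : 0 < c₂) (hε : 0 < ε) :
    (∑ j ∈ Finset.range N,
        μ ^ (N - 1 - j) *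
          Real.sqrt (c₂ /
            ((4 * c₂ / ε ^ 2) * ((1 - μ ^ ((2 / 3 : ℝ) * N)) / (1 - μ ^ ((2 : ℝ) / 3))) ^ 2 *
              μ ^ ((2 / 3 : ℝ) * ((N - 1 - j : ℕ) : ℝ))))
      ≤ ε / 2) ∧
    ∀ K : ℕ → ℝ, (∀ j < N, 0 < K j) →
      (∑ j ∈ Finset.range N, μ ^ (N - 1 - j) * Real.sqrt (c₂ / K j) ≤ ε / 2) →
      ∑ j ∈ Finset.range N,
          (4 * c₂ / ε ^ 2) * ((1 - μ ^ ((2 / 3 : ℝ) * N)) / (1 - μ ^ ((2 : ℝ) / 3))) ^ 2 *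
            μ ^ ((2 / 3 : ℝ) * ((N - 1 - j : ℕ) : ℝ))
        ≤ ∑ j ∈ Finset.range N, K j := by
  set S := (1 - μ ^ ((2 / 3 : ℝ) * N)) / (1 - μ ^ ((2 : ℝ) / 3))
  set C := 4 * c₂ / ε ^ 2 * S ^ 2
  have hS : ∑ j ∈ range N, μ ^ ((2 / 3 : ℝ) * ((N - 1 - j : ℕ) : ℝ)) = S :=
    sum_range_rpow_mul_reflect hμ0.le (rpow_lt_one hμ0.le hμ1 (by norm_num)).ne N
  have hS0 : 0 ≤ S := hS ▸ sum_nonneg fun j _ => by positivity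
  have hC : C = (2 * √c₂ * S / ε) ^ 2 := by
    rw [div_pow, mul_pow, mul_pow, sq_sqrt hc₂.le]
    ring
  have hsqrtC : √C = 2 * √c₂ * S / ε := by
    rw [hC, sqrt_sq (by positivity)]
  have hc₂' : √c₂ ≠ 0 := (sqrt_pos.2 hc₂).ne'
  have hk : ∀ j ∈ range N, 0 ≤ C * μ ^ ((2 / 3 : ℝ) * ((N - 1 - j : ℕ) : ℝ)) :=
    fun j _ => by positivity
  have hka : ∀ j ∈ range N,
      C * μ ^ ((2 / 3 : ℝ) * ((N - 1 - j : ℕ) : ℝ)) *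
          √(C * μ ^ ((2 / 3 : ℝ) * ((N - 1 - j : ℕ) : ℝ)))
        = C * √C / √c₂ * (μ ^ (N - 1 - j) * √c₂) := fun j _ => by
    rw [sqrt_mul (by positivity), mul_mul_mul_comm, rpow_two_thirds_mul_mul_sqrt hμ0]
    field_simp
  have hsum : ∑ j ∈ range N, C * μ ^ ((2 / 3 : ℝ) * ((N - 1 - j : ℕ) : ℝ))
      = C * √C / √c₂ * (ε / 2) := by
    rw [← mul_sum, hS, hsqrtC]
    field_simp
  have hterm : ∀ (x : ℝ) j, μ ^ (N - 1 - j) * √(c₂ / x) = μ ^ (N - 1 - j) * √c₂ / √x :=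
    fun x j => by rw [sqrt_div hc₂.le, mul_div_assoc]
  simp only [hterm]
  exact ⟨sum_div_sqrt_le_of_sum_eq (by positivity) hk hka hsum, fun K hK hKb =>
    sum_le_sum_of_sum_div_sqrt_le (by positivity) hk hka hsum
      (fun j hj => hK j (mem_range.1 hj)) hKb⟩
end

section
/- (Deterministic Robbins–Siegmund) Let (Z_k), (A_k), (B_k), (D_k) be sequences of nonnegative reals with ∑ A_k < ∞, ∑ B_k < ∞, ∑ D_k = ∞, D_k ≤ 1 for all k, and Z_{k+1} ≤ Z_k(1 + A_k − D_k) + B_k. Then Z_k → 0 as k → ∞. -/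
/-!
Dropping `-D k` from the recursion gives `Z (k + 1) ≤ Z k (1 + A k) + B k`, and the discrete
Grönwall bound `Z n ≤ (Z 0 + ∑ B) exp (∑ A)` shows that `Z` is bounded by some `M`. Then
`Z (k + 1) ≤ Z k + G k - D k Z k` with `G = M A + B` summable, so `W k = Z k + ∑_{j ≥ k} G j`
satisfies `W (k + 1) + D k Z k ≤ W k`. Hence `W`, and with it `Z`, converges to some `L`, and
`∑ D k Z k < ∞`. If `L ≠ 0`, then `D k = (D k Z k) / Z k = O(D k Z k)` would be summable.
-/

open Filter Finset Topology Asymptotics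

theorem le_mul_exp_of_le_mul_one_add_add {u a b : ℕ → ℝ} (hu0 : 0 ≤ u 0) (ha : ∀ k, 0 ≤ a k)
    (hb : ∀ k, 0 ≤ b k) (h : ∀ k, u (k + 1) ≤ u k * (1 + a k) + b k) (n : ℕ) :
    u n ≤ (u 0 + ∑ k ∈ range n, b k) * Real.exp (∑ k ∈ range n, a k) := by
  induction n with
  | zero => simp
  | succ n ih =>
    have hc : 0 ≤ u 0 + ∑ k ∈ range n, b k := add_nonneg hu0 (sum_nonneg fun k _ => hb k)
    have hexp : 1 ≤ Real.exp (∑ k ∈ range n, a k) * Real.exp (a n) := by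
      rw [← Real.exp_add]
      exact Real.one_le_exp (add_nonneg (sum_nonneg fun k _ => ha k) (ha n))
    rw [sum_range_succ, sum_range_succ, Real.exp_add]
    calc u (n + 1) ≤ u n * (1 + a n) + b n := h n
      _ ≤ (u 0 + ∑ k ∈ range n, b k) * Real.exp (∑ k ∈ range n, a k) * Real.exp (a n)
          + b n * (Real.exp (∑ k ∈ range n, a k) * Real.exp (a n)) := by
        gcongr ?_ + ?_
        · exact mul_le_mul ih (by linarith [Real.add_one_le_exp (a n)]) (by linarith [ha n])
            (mul_nonneg hc (Real.exp_pos _).le)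
        · exact le_mul_of_one_le_right (hb n) hexp
      _ = _ := by ring

theorem exists_forall_le_of_le_mul_one_add_add {u a b : ℕ → ℝ} (hu0 : 0 ≤ u 0)
    (ha : ∀ k, 0 ≤ a k) (hb : ∀ k, 0 ≤ b k) (hsa : Summable a) (hsb : Summable b)
    (h : ∀ k, u (k + 1) ≤ u k * (1 + a k) + b k) : ∃ M, ∀ n, u n ≤ M := by
  refine ⟨(u 0 + ∑' k, b k) * Real.exp (∑' k, a k), fun n => ?_⟩
  refine (le_mul_exp_of_le_mul_one_add_add hu0 ha hb h n).trans ?_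
  have hsum_b := hsb.sum_le_tsum (range n) fun k _ => hb k
  have hsum_a := hsa.sum_le_tsum (range n) fun k _ => ha k
  have hc : 0 ≤ u 0 + ∑' k, b k := add_nonneg hu0 (tsum_nonneg hb)
  gcongr

theorem tendsto_and_summable_of_le_add_sub {u g d : ℕ → ℝ} (hu : ∀ k, 0 ≤ u k)
    (hg : ∀ k, 0 ≤ g k) (hgs : Summable g) (hd : ∀ k, 0 ≤ d k)
    (h : ∀ k, u (k + 1) ≤ u k + g k - d k) :
    (∃ L, Tendsto u atTop (𝓝 L)) ∧ Summable d := by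
  set W : ℕ → ℝ := fun k => u k + ∑' j, g (j + k) with hW
  have hstep : ∀ k, W (k + 1) + d k ≤ W k := by
    intro k
    have htail : ∑' j, g (j + k) = g k + ∑' j, g (j + (k + 1)) := by
      rw [((summable_nat_add_iff k).2 hgs).tsum_eq_zero_add]
      simp only [zero_add, add_right_comm _ 1 k, add_assoc]
    simp only [hW, htail]
    linarith [h k]
  have hW_nonneg : ∀ k, 0 ≤ W k := fun k => add_nonneg (hu k) (tsum_nonneg fun j => hg _)
  have hW_anti : Antitone W := antitone_nat_of_succ_le fun k => by linarith [hstep k, hd k]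
  refine ⟨⟨⨅ k, W k, ?_⟩, ?_⟩
  · have := (tendsto_atTop_ciInf hW_anti ⟨0, by rintro _ ⟨k, rfl⟩; exact hW_nonneg k⟩).sub
      (tendsto_sum_nat_add g)
    simpa [hW] using this
  · refine summable_of_sum_range_le (c := W 0) hd fun n => ?_
    calc ∑ k ∈ range n, d k ≤ ∑ k ∈ range n, (W k - W (k + 1)) :=
          sum_le_sum fun k _ => by linarith [hstep k]
      _ = W 0 - W n := sum_range_sub' W n
      _ ≤ W 0 := by linarith [hW_nonneg n]

theorem Summable.of_mul_of_tendsto_ne_zero {u d : ℕ → ℝ} {L : ℝ}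
    (hdu : Summable fun k => d k * u k) (hu : Tendsto u atTop (𝓝 L)) (hL : L ≠ 0) :
    Summable d := by
  refine summable_of_isBigO_nat hdu ?_
  have hinv : (fun k => (u k)⁻¹) =O[atTop] (fun _ => (1 : ℝ)) := (hu.inv₀ hL).isBigO_one ℝ
  refine ((isBigO_refl (fun k => d k * u k) atTop).mul hinv).congr' ?_ (by simp)
  filter_upwards [hu.eventually_ne hL] with k hk
  field_simp

theorem deterministic_robbins_siegmund_general
    (Z A B D : ℕ → ℝ)
    (hZ : ∀ k, 0 ≤ Z k) (hA : ∀ k, 0 ≤ A k) (hB : ∀ k, 0 ≤ B k)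
    (hD0 : ∀ k, 0 ≤ D k)
    (hAsum : Summable A) (hBsum : Summable B)
    (hDsum : Filter.Tendsto (fun n => ∑ k ∈ Finset.range n, D k) Filter.atTop Filter.atTop)
    (hrec : ∀ k, Z (k + 1) ≤ Z k * (1 + A k - D k) + B k) :
    Filter.Tendsto Z Filter.atTop (nhds 0) := by
  obtain ⟨M, hM⟩ := exists_forall_le_of_le_mul_one_add_add (hZ 0) hA hB hAsum hBsum
    fun k => by nlinarith [hrec k, mul_nonneg (hZ k) (hD0 k)]
  have hM0 : 0 ≤ M := (hZ 0).trans (hM 0)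
  have hstep : ∀ k, Z (k + 1) ≤ Z k + (M * A k + B k) - D k * Z k := fun k => by
    nlinarith [hrec k, mul_le_mul_of_nonneg_right (hM k) (hA k)]
  obtain ⟨⟨L, hL⟩, hDZ⟩ := tendsto_and_summable_of_le_add_sub hZ
    (fun k => add_nonneg (mul_nonneg hM0 (hA k)) (hB k)) ((hAsum.mul_left M).add hBsum)
    (fun k => mul_nonneg (hD0 k) (hZ k)) hstep
  obtain rfl : L = 0 := by
    by_contra hL0
    exact (not_summable_iff_tendsto_nat_atTop_of_nonneg hD0).2 hDsum
      (hDZ.of_mul_of_tendsto_ne_zero hL hL0)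
  exact hL

theorem deterministic_robbins_siegmund
    (Z A B D : ℕ → ℝ)
    (hZ : ∀ k, 0 ≤ Z k) (hA : ∀ k, 0 ≤ A k) (hB : ∀ k, 0 ≤ B k)
    (hD0 : ∀ k, 0 ≤ D k) (hD1 : ∀ k, D k ≤ 1)
    (hAsum : Summable A) (hBsum : Summable B)
    (hDsum : Filter.Tendsto (fun n => ∑ k ∈ Finset.range n, D k) Filter.atTop Filter.atTop)
    (hrec : ∀ k, Z (k + 1) ≤ Z k * (1 + A k - D k) + B k) :
    Filter.Tendsto Z Filter.atTop (nhds 0) :=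
  deterministic_robbins_siegmund_general Z A B D hZ hA hB hD0 hAsum hBsum hDsum hrec
end
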